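/- arXiv:1903.09238 — 2 statements merged into one kernel-verified Lean document; each statement's English description precedes it below -/
import Mathlib

section
/- The Setwise Levenshtein Distance SLD between multisets of strings is a metric: SLD(X,X)=0, SLD is symmetric, and SLD(X,Y)+SLD(Y,Z) ≥ SLD(X,Z) for all finite multisets of strings X, Y, Z. -/
/-- Cost structure for edit distances (formerly `Levenshtein.Cost` in Mathlib). -/
structure Levenshtein.Cost (α β δ : Type*) where
  delete : α → δ
  insert : β → δ
  substitute : α → β → δ

/-- The default cost: every operation costs `1`, substituting equal letters costs `0`. -/
def Levenshtein.defaultCost {α : Type*} [DecidableEq α] : Levenshtein.Cost α α ℕ where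
  delete _ := 1
  insert _ := 1
  substitute a b := if a = b then 0 else 1

/-- Levenshtein distance with cost `C` (formerly in Mathlib), given by its defining recursion. -/
def levenshtein {α β δ : Type*} [AddZeroClass δ] [Min δ] (C : Levenshtein.Cost α β δ) :
    List α → List β → δ
  | [], [] => 0
  | [], y :: ys => C.insert y + levenshtein C [] ys
  | x :: xs, [] => C.delete x + levenshtein C xs []
  | x :: xs, y :: ys => min (C.delete x + levenshtein C xs (y :: ys))
      (min (C.insert y + levenshtein C (x :: xs) ys) (C.substitute x y + levenshtein C xs ys))

variable {α : Type*} [Fintype α] [DecidableEq α]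

/-- Levenshtein distance: the minimum number of single-character insertions,
deletions, and substitutions transforming one string into another. -/
def LD (x y : List α) : ℕ := levenshtein Levenshtein.defaultCost x y

/-- Normalized Levenshtein distance. -/
noncomputable def NLD (x y : List α) : ℝ :=
  2 * LD x y / (x.length + y.length + LD x y)

/-- Aggregate length of the tokens of a tokenized string (multiset of strings). -/
def aggLen (X : Multiset (List α)) : ℕ := (X.map List.length).sum

/-- Pad a multiset of strings with empty strings up to size `k`. -/
def pad (X : Multiset (List α)) (k : ℕ) : Multiset (List α) :=
  X + Multiset.replicate (k - Multiset.card X) []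

/-- Setwise Levenshtein distance: pad both multisets with empty strings to size
`k = max(|X|,|Y|)`, then take the minimum over all bijections (i.e. over all
orderings of the two padded multisets as lists) of the sum of tokenwise
Levenshtein distances. -/
noncomputable def SLD (X Y : Multiset (List α)) : ℕ :=
  sInf { n | ∃ xs ys : List (List α),
    (↑xs : Multiset (List α)) = pad X (max (Multiset.card X) (Multiset.card Y)) ∧
    (↑ys : Multiset (List α)) = pad Y (max (Multiset.card X) (Multiset.card Y)) ∧
    n = (List.zipWith LD xs ys).sum }

/-- Normalized Setwise Levenshtein distance. -/
noncomputable def NSLD (X Y : Multiset (List α)) : ℝ :=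
  2 * SLD X Y / (aggLen X + aggLen Y + SLD X Y)

/-!
`SLD X Y` is the least cost of a matching between `X` and `Y` padded with empty strings to any
common size `k ≥ |X|, |Y|`, not only to `max |X| |Y|`: extra pairs `([], [])` cost nothing, and
conversely a pair `([], y)` and a pair `(x, [])` can be merged into `(x, y)` at no extra cost by
the triangle inequality for `LD`. So pad `X`, `Y`, `Z` to a common size; optimal matchings
`X ~ Y` and `Y ~ Z` then compose along `Y` into a matching `X ~ Z`, and the triangle inequality
for `LD` bounds its cost pair by pair.
-/

section

omit [Fintype α]

lemma LD_nil_left (y : List α) : LD [] y = y.length := by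
  induction y with
  | nil => simp [LD, levenshtein]
  | cons b y ih =>
    simp only [LD, levenshtein, Levenshtein.defaultCost] at ih ⊢
    rw [ih, List.length_cons, Nat.add_comm]

lemma LD_nil_right (x : List α) : LD x [] = x.length := by
  induction x with
  | nil => simp [LD, levenshtein]
  | cons a x ih =>
    simp only [LD, levenshtein, Levenshtein.defaultCost] at ih ⊢
    rw [ih, List.length_cons, Nat.add_comm]

lemma LD_cons_cons (a b : α) (x y : List α) :
    LD (a :: x) (b :: y) =
      min (1 + LD x (b :: y)) (min (1 + LD (a :: x) y) ((if a = b then 0 else 1) + LD x y)) := by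
  simp [LD, levenshtein, Levenshtein.defaultCost]

lemma LD_cons_left_le (a : α) (x y : List α) : LD (a :: x) y ≤ 1 + LD x y := by
  cases y with
  | nil => simp [LD_nil_right, Nat.add_comm]
  | cons b y => rw [LD_cons_cons]; omega

lemma LD_cons_right_le (b : α) (x y : List α) : LD x (b :: y) ≤ 1 + LD x y := by
  cases x with
  | nil => simp [LD_nil_left, Nat.add_comm]
  | cons a x => rw [LD_cons_cons]; omega

lemma LD_cons_cons_le (a b : α) (x y : List α) :
    LD (a :: x) (b :: y) ≤ (if a = b then 0 else 1) + LD x y := by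
  rw [LD_cons_cons]; omega

@[simp]
lemma LD_self (x : List α) : LD x x = 0 := by
  induction x with
  | nil => simp [LD, levenshtein]
  | cons a x ih => simpa [ih] using LD_cons_cons_le a a x x

lemma LD_comm (x y : List α) : LD x y = LD y x := by
  induction x generalizing y with
  | nil => rw [LD_nil_left, LD_nil_right]
  | cons a x ih =>
    induction y with
    | nil => rw [LD_nil_left, LD_nil_right]
    | cons b y ihy =>
      rw [LD_cons_cons, LD_cons_cons, ih, ih, ihy]
      simp only [eq_comm (a := a)]
      omega

lemma LD_le_length_add_length (x y : List α) : LD x y ≤ x.length + y.length := by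
  induction x with
  | nil => rw [LD_nil_left, List.length_nil, Nat.zero_add]
  | cons a x ih => have := LD_cons_left_le a x y; rw [List.length_cons]; omega

lemma length_le_length_add_LD : ∀ y z : List α, z.length ≤ y.length + LD y z
  | [], z => by rw [LD_nil_left, List.length_nil, Nat.zero_add]
  | _ :: _, [] => Nat.zero_le _
  | b :: y, c :: z => by
    have h₁ := length_le_length_add_LD y (c :: z)
    have h₂ := length_le_length_add_LD (b :: y) z
    have h₃ := length_le_length_add_LD y z
    simp only [List.length_cons] at *
    rw [LD_cons_cons]
    split_ifs <;> omega

lemma LD_triangle : ∀ x y z : List α, LD x z ≤ LD x y + LD y z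
  | [], y, z => by rw [LD_nil_left, LD_nil_left]; exact length_le_length_add_LD y z
  | _ :: _, y, [] => by
    rw [LD_nil_right, LD_nil_right, LD_comm, Nat.add_comm]
    exact length_le_length_add_LD y _
  | x, [], z => by
    rw [LD_nil_right, LD_nil_left]; exact LD_le_length_add_length x z
  | a :: x, b :: y, c :: z => by
    -- Each of the nine combinations of first edit operations in the recursions for
    -- `LD (a :: x) (b :: y)` and `LD (b :: y) (c :: z)` is dominated by one of these bounds.
    have hsub :
        (if a = c then 0 else 1) ≤ (if a = b then 0 else 1) + (if b = c then 0 else 1) := by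
      split_ifs <;> simp_all
    have := LD_cons_cons a b x y
    have := LD_cons_cons b c y z
    have := LD_cons_left_le a x (c :: z)
    have := LD_cons_right_le c (a :: x) z
    have := LD_cons_cons_le a c x z
    have := LD_triangle x (b :: y) (c :: z)
    have := LD_triangle (a :: x) (b :: y) z
    have := LD_triangle (a :: x) y (c :: z)
    have := LD_triangle (a :: x) y z
    have := LD_triangle x y (c :: z)
    have := LD_triangle x y z
    omega
termination_by x y z => x.length + y.length + z.length

section Matching

variable {β γ : Type*}

-- The pairs `(xⁱ, y^{σ(i)})` of a bijection `σ` between `A` and `B`.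
def IsMatching (P : Multiset (β × γ)) (A : Multiset β) (B : Multiset γ) : Prop :=
  P.map Prod.fst = A ∧ P.map Prod.snd = B

lemma Multiset.exists_eq_cons_of_map_eq_cons {f : β → γ} {P : Multiset β} {b : γ}
    {B : Multiset γ} (h : P.map f = b ::ₘ B) :
    ∃ p P', P = p ::ₘ P' ∧ f p = b ∧ P'.map f = B := by
  obtain ⟨p, hp, rfl⟩ := Multiset.mem_map.mp (h ▸ Multiset.mem_cons_self b B)
  obtain ⟨P', rfl⟩ := Multiset.exists_cons_of_mem hp
  rw [Multiset.map_cons, Multiset.cons_inj_right] at h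
  exact ⟨p, P', rfl, rfl, h⟩

lemma exists_isMatching_of_card_eq {A : Multiset β} {B : Multiset γ}
    (h : Multiset.card A = Multiset.card B) : ∃ P, IsMatching P A B := by
  have hlen : A.toList.length = B.toList.length := by simpa using h
  refine ⟨A.toList.zip B.toList, ?_, ?_⟩
  · rw [Multiset.map_coe, List.map_fst_zip hlen.le, Multiset.coe_toList]
  · rw [Multiset.map_coe, List.map_snd_zip hlen.ge, Multiset.coe_toList]

lemma IsMatching.swap {P : Multiset (β × γ)} {A : Multiset β} {B : Multiset γ}
    (h : IsMatching P A B) : IsMatching (P.map Prod.swap) B A := by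
  simp only [IsMatching, Multiset.map_map]
  exact ⟨h.2, h.1⟩

lemma isMatching_map_diag (A : Multiset β) : IsMatching (A.map fun a => (a, a)) A A := by
  simp [IsMatching, Multiset.map_map]

lemma IsMatching.replicate_add {P : Multiset (β × γ)} {A : Multiset β} {B : Multiset γ}
    (h : IsMatching P A B) (n : ℕ) (b : β) (c : γ) :
    IsMatching (Multiset.replicate n (b, c) + P) (Multiset.replicate n b + A)
      (Multiset.replicate n c + B) := by
  simp only [IsMatching, Multiset.map_add, Multiset.map_replicate]
  exact ⟨congrArg _ h.1, congrArg _ h.2⟩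

end Matching

def matchingCost (P : Multiset (List α × List α)) : ℕ := (P.map fun p => LD p.1 p.2).sum

@[simp]
lemma matchingCost_cons (p : List α × List α) (P : Multiset (List α × List α)) :
    matchingCost (p ::ₘ P) = LD p.1 p.2 + matchingCost P := by
  simp [matchingCost]

lemma matchingCost_coe (l : List (List α × List α)) :
    matchingCost (l : Multiset (List α × List α)) =
      (List.zipWith LD (l.map Prod.fst) (l.map Prod.snd)).sum := by
  induction l with
  | nil => rfl
  | cons p l ih => simp [← Multiset.cons_coe, ih]

lemma matchingCost_swap (P : Multiset (List α × List α)) :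
    matchingCost (P.map Prod.swap) = matchingCost P := by
  simp [matchingCost, Multiset.map_map, LD_comm]

lemma matchingCost_map_diag (A : Multiset (List α)) :
    matchingCost (A.map fun a => (a, a)) = 0 := by
  simp [matchingCost, Multiset.map_map]

lemma matchingCost_replicate_nil_add (n : ℕ) (P : Multiset (List α × List α)) :
    matchingCost (Multiset.replicate n ([], []) + P) = matchingCost P := by
  simp [matchingCost]

lemma IsMatching.exists_comp {P Q : Multiset (List α × List α)} {A B C : Multiset (List α)}
    (hP : IsMatching P A B) (hQ : IsMatching Q B C) :
    ∃ R, IsMatching R A C ∧ matchingCost R ≤ matchingCost P + matchingCost Q := by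
  obtain ⟨rfl, rfl⟩ := hP
  obtain ⟨hQB, rfl⟩ := hQ
  induction P using Multiset.induction_on generalizing Q with
  | empty =>
    rw [Multiset.map_zero, Multiset.map_eq_zero] at hQB
    exact ⟨0, ⟨rfl, by simp [hQB]⟩, Nat.zero_le _⟩
  | cons p P ih =>
    rw [Multiset.map_cons] at hQB
    obtain ⟨q, Q, rfl, hq, hQB⟩ := Multiset.exists_eq_cons_of_map_eq_cons hQB
    obtain ⟨R, ⟨hRA, hRC⟩, hR⟩ := ih hQB
    refine ⟨(p.1, q.2) ::ₘ R, ⟨by simp [hRA], by simp [hRC]⟩, ?_⟩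
    have := LD_triangle p.1 p.2 q.2
    simp only [matchingCost_cons, ← hq] at this ⊢
    omega

lemma IsMatching.exists_of_cons_nil {P : Multiset (List α × List α)} {A B : Multiset (List α)}
    (h : IsMatching P ([] ::ₘ A) ([] ::ₘ B)) :
    ∃ P', IsMatching P' A B ∧ matchingCost P' ≤ matchingCost P := by
  obtain ⟨hfst, hsnd⟩ := h
  obtain ⟨q, P, rfl, hq, hPA⟩ := Multiset.exists_eq_cons_of_map_eq_cons hfst
  rw [Multiset.map_cons, Multiset.cons_eq_cons] at hsnd
  rcases hsnd with ⟨-, hPB⟩ | ⟨-, T, hPT, rfl⟩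
  · exact ⟨P, ⟨hPA, hPB⟩, by simp⟩
  · obtain ⟨r, P, rfl, hr, hPT⟩ := Multiset.exists_eq_cons_of_map_eq_cons hPT
    refine ⟨(r.1, q.2) ::ₘ P, ⟨by simpa using hPA, by simp [hPT]⟩, ?_⟩
    have := LD_triangle r.1 [] q.2
    simp only [matchingCost_cons, hq, hr]
    omega

lemma IsMatching.exists_of_replicate_nil_add {P : Multiset (List α × List α)}
    {A B : Multiset (List α)} {n : ℕ}
    (h : IsMatching P (Multiset.replicate n [] + A) (Multiset.replicate n [] + B)) :
    ∃ P', IsMatching P' A B ∧ matchingCost P' ≤ matchingCost P := by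
  induction n generalizing P with
  | zero => exact ⟨P, by simpa using h, le_rfl⟩
  | succ n ih =>
    simp only [Multiset.replicate_succ, Multiset.cons_add] at h
    obtain ⟨P', hP', hle⟩ := h.exists_of_cons_nil
    obtain ⟨P'', hP'', hle'⟩ := ih hP'
    exact ⟨P'', hP'', hle'.trans hle⟩

section Pad

omit [DecidableEq α]

lemma card_pad {X : Multiset (List α)} {k : ℕ} (h : Multiset.card X ≤ k) :
    Multiset.card (pad X k) = k := by
  simp only [pad, Multiset.card_add, Multiset.card_replicate]
  omega

lemma pad_eq_replicate_add_pad {X : Multiset (List α)} {k K : ℕ} (hX : Multiset.card X ≤ k)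
    (hk : k ≤ K) : pad X K = Multiset.replicate (K - k) [] + pad X k := by
  rw [pad, pad, add_left_comm, ← Multiset.replicate_add]
  congr 2
  omega

end Pad

lemma SLD_eq_sInf (X Y : Multiset (List α)) :
    SLD X Y = sInf (matchingCost '' {P | IsMatching P
      (pad X (max (Multiset.card X) (Multiset.card Y)))
      (pad Y (max (Multiset.card X) (Multiset.card Y)))}) := by
  unfold SLD
  congr 1
  ext n
  simp only [Set.mem_image]
  constructor
  · rintro ⟨xs, ys, hxs, hys, rfl⟩
    have hlen : xs.length = ys.length := by
      rw [← Multiset.coe_card, ← Multiset.coe_card, hxs, hys, card_pad (le_max_left _ _),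
        card_pad (le_max_right _ _)]
    refine ⟨xs.zip ys, ⟨?_, ?_⟩, ?_⟩
    · rw [Multiset.map_coe, List.map_fst_zip hlen.le, hxs]
    · rw [Multiset.map_coe, List.map_snd_zip hlen.ge, hys]
    · rw [matchingCost_coe, List.map_fst_zip hlen.le, List.map_snd_zip hlen.ge]
  · rintro ⟨P, ⟨hX, hY⟩, rfl⟩
    refine ⟨P.toList.map Prod.fst, P.toList.map Prod.snd, ?_, ?_, ?_⟩
    · rw [← Multiset.map_coe, Multiset.coe_toList, hX]
    · rw [← Multiset.map_coe, Multiset.coe_toList, hY]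
    · rw [← matchingCost_coe, Multiset.coe_toList]

lemma SLD_le_matchingCost_of_isMatching_pad {X Y : Multiset (List α)} {k : ℕ}
    {P : Multiset (List α × List α)} (hX : Multiset.card X ≤ k) (hY : Multiset.card Y ≤ k)
    (h : IsMatching P (pad X k) (pad Y k)) : SLD X Y ≤ matchingCost P := by
  have hk : max (Multiset.card X) (Multiset.card Y) ≤ k := max_le hX hY
  rw [pad_eq_replicate_add_pad (le_max_left _ _) hk,
    pad_eq_replicate_add_pad (le_max_right _ _) hk] at h
  obtain ⟨P', hP', hle⟩ := h.exists_of_replicate_nil_add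
  rw [SLD_eq_sInf]
  exact le_trans (Nat.sInf_le ⟨P', hP', rfl⟩) hle

lemma exists_isMatching_pad_matchingCost_eq_SLD {X Y : Multiset (List α)} {k : ℕ}
    (hX : Multiset.card X ≤ k) (hY : Multiset.card Y ≤ k) :
    ∃ P, IsMatching P (pad X k) (pad Y k) ∧ matchingCost P = SLD X Y := by
  set m := max (Multiset.card X) (Multiset.card Y)
  have hk : m ≤ k := max_le hX hY
  obtain ⟨P₀, hP₀⟩ : ∃ P, IsMatching P (pad X m) (pad Y m) :=
    exists_isMatching_of_card_eq <| by
      rw [card_pad (le_max_left _ _), card_pad (le_max_right _ _)]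
  obtain ⟨P, hP, hPc⟩ : SLD X Y ∈ matchingCost '' {P | IsMatching P (pad X m) (pad Y m)} :=
    SLD_eq_sInf X Y ▸ Nat.sInf_mem (Set.image_nonempty.mpr ⟨P₀, hP₀⟩)
  refine ⟨Multiset.replicate (k - m) ([], []) + P, ?_,
    by rw [matchingCost_replicate_nil_add, hPc]⟩
  rw [pad_eq_replicate_add_pad (le_max_left _ _) hk, pad_eq_replicate_add_pad (le_max_right _ _) hk]
  exact hP.replicate_add _ _ _

lemma SLD_self (X : Multiset (List α)) : SLD X X = 0 :=
  Nat.eq_zero_of_le_zero <|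
    (SLD_le_matchingCost_of_isMatching_pad le_rfl le_rfl (isMatching_map_diag _)).trans_eq
      (matchingCost_map_diag _)

lemma SLD_le_SLD_swap (X Y : Multiset (List α)) : SLD Y X ≤ SLD X Y := by
  obtain ⟨P, hP, hPc⟩ := exists_isMatching_pad_matchingCost_eq_SLD
    (le_max_left (Multiset.card X) (Multiset.card Y)) (le_max_right _ _)
  rw [← hPc, ← matchingCost_swap]
  exact SLD_le_matchingCost_of_isMatching_pad (le_max_right _ _) (le_max_left _ _) hP.swap

lemma SLD_comm (X Y : Multiset (List α)) : SLD X Y = SLD Y X :=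
  le_antisymm (SLD_le_SLD_swap Y X) (SLD_le_SLD_swap X Y)

lemma SLD_triangle (X Y Z : Multiset (List α)) : SLD X Z ≤ SLD X Y + SLD Y Z := by
  set K := max (Multiset.card X) (max (Multiset.card Y) (Multiset.card Z))
  have hX : Multiset.card X ≤ K := le_max_left _ _
  have hY : Multiset.card Y ≤ K := (le_max_left _ _).trans (le_max_right _ _)
  have hZ : Multiset.card Z ≤ K := (le_max_right _ _).trans (le_max_right _ _)
  obtain ⟨P, hP, hPc⟩ := exists_isMatching_pad_matchingCost_eq_SLD hX hY
  obtain ⟨Q, hQ, hQc⟩ := exists_isMatching_pad_matchingCost_eq_SLD hY hZ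
  obtain ⟨R, hR, hRc⟩ := hP.exists_comp hQ
  calc SLD X Z ≤ matchingCost R := SLD_le_matchingCost_of_isMatching_pad hX hZ hR
    _ ≤ SLD X Y + SLD Y Z := hPc ▸ hQc ▸ hRc

end

theorem SLD_isMetric (X Y Z : Multiset (List α)) :
    SLD X X = 0 ∧ SLD X Y = SLD Y X ∧ SLD X Z ≤ SLD X Y + SLD Y Z :=
  ⟨SLD_self X, SLD_comm X Y, SLD_triangle X Y Z⟩
end

section
/- If NLD(x,y) ≤ T for strings x, y and threshold T ∈ [0,1), and |x| > |y|, then LD(x,y) ≤ ⌊T·|y|/(1−T)⌋. -/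
variable {α : Type*} [Fintype α] [DecidableEq α]

theorem levenshtein_length_le {σ τ : Type*} (C : Levenshtein.Cost σ τ ℕ)
    (hdelete : ∀ a, 1 ≤ C.delete a) (xs : List σ) (ys : List τ) :
    xs.length ≤ ys.length + levenshtein C xs ys := by
  induction xs generalizing ys with
  | nil => simp
  | cons a xs ihx =>
    induction ys with
    | nil =>
      have := ihx []
      have := hdelete a
      simp only [levenshtein, List.length_cons, List.length_nil] at *
      omega
    | cons b ys ihy =>
      have := ihx (b :: ys)
      have := ihx ys
      have := hdelete a
      simp only [levenshtein, List.length_cons] at *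
      omega

theorem length_le_length_add_LD_s13 {σ : Type*} [DecidableEq σ] (x y : List σ) :
    x.length ≤ y.length + LD x y :=
  levenshtein_length_le _ (fun _ => le_rfl) x y

/-- Replacing `|x|` by its bound `|y| + LD` in the denominator of `NLD` linearizes `NLD ≤ T`. -/
theorem LD_mul_one_sub_le_of_NLD_le {σ : Type*} [DecidableEq σ] (x y : List σ) {T : ℝ}
    (hT : 0 ≤ T) (h : NLD x y ≤ T) :
    (LD x y : ℝ) * (1 - T) ≤ T * y.length := by
  rcases Nat.eq_zero_or_pos (LD x y) with hd | hd
  · rw [hd, Nat.cast_zero, zero_mul]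
    positivity
  have hx : (x.length : ℝ) ≤ y.length + LD x y := mod_cast length_le_length_add_LD_s13 x y
  have hpos : (0 : ℝ) < x.length + y.length + LD x y := by positivity
  rw [NLD, div_le_iff₀ hpos] at h
  have : 2 * (LD x y : ℝ) ≤ T * (2 * y.length + 2 * LD x y) :=
    h.trans (mul_le_mul_of_nonneg_left (by linarith) hT)
  linarith

theorem LD_le_of_NLD_le'_general (x y : List α) (T : ℝ) (hT0 : 0 ≤ T) (hT1 : T < 1)
    (h : NLD x y ≤ T) :
    (LD x y : ℤ) ≤ ⌊T * (y.length : ℝ) / (1 - T)⌋ := by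
  rw [Int.le_floor, Int.cast_natCast, le_div_iff₀ (sub_pos.mpr hT1)]
  exact LD_mul_one_sub_le_of_NLD_le x y hT0 h

theorem LD_le_of_NLD_le' (x y : List α) (T : ℝ) (hT0 : 0 ≤ T) (hT1 : T < 1)
    (hlen : x.length > y.length) (h : NLD x y ≤ T) :
    (LD x y : ℤ) ≤ ⌊T * (y.length : ℝ) / (1 - T)⌋ :=
  LD_le_of_NLD_le'_general x y T hT0 hT1 h
end
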